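/- arXiv:0909.3789 — 8 statements merged into one kernel-verified Lean document; each statement's English description precedes it below -/
import Mathlib

section
/- Let A be a square matrix over a field, partitioned as A = [[P, Q], [R, S]] with P invertible. Then the pivot A*X = [[P⁻¹, -P⁻¹Q], [RP⁻¹, S - RP⁻¹Q]] satisfies the exchange identity: A applied to (x₁, x₂) equals (y₁, y₂) if and only if A*X applied to (y₁, x₂) equals (x₁, y₂). -/
/-!
Since `P` is invertible, the first block equation `P x₁ + Q x₂ = y₁` can be solved for
`x₁ = P⁻¹ y₁ - P⁻¹ Q x₂`; substituting this into the second block equation `R x₁ + S x₂ = y₂`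
turns it into `R P⁻¹ y₁ + (S - R P⁻¹ Q) x₂ = y₂`, with the Schur complement appearing.
-/

open Matrix

namespace Matrix

variable {n m l K : Type*} [Fintype n] [Fintype m] [Fintype l] [CommRing K]

theorem mulVec_add_mulVec_eq_iff_of_isUnit_det [DecidableEq n] {P : Matrix n n K}
    (Q : Matrix n m K) (hP : IsUnit P.det) {x₁ y₁ : n → K} {x₂ : m → K} :
    P *ᵥ x₁ + Q *ᵥ x₂ = y₁ ↔ P⁻¹ *ᵥ y₁ + -(P⁻¹ * Q) *ᵥ x₂ = x₁ := by
  constructor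
  · rintro rfl
    rw [mulVec_add, mulVec_mulVec, nonsing_inv_mul _ hP, one_mulVec, mulVec_mulVec,
      neg_mulVec, add_neg_cancel_right]
  · rintro rfl
    rw [mulVec_add, mulVec_mulVec, mulVec_mulVec, mul_nonsing_inv _ hP, Matrix.mul_neg,
      mul_nonsing_inv_cancel_left _ _ hP, one_mulVec, neg_mulVec, neg_add_cancel_right]

theorem mulVec_add_mulVec_eq_schur_mulVec (M : Matrix n l K) (Q : Matrix l m K)
    (R : Matrix m n K) (S : Matrix m m K) (y : l → K) (x : m → K) :
    R *ᵥ (M *ᵥ y + -(M * Q) *ᵥ x) + S *ᵥ x = (R * M) *ᵥ y + (S - R * M * Q) *ᵥ x := by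
  simp only [mulVec_add, sub_mulVec, neg_mulVec, mulVec_neg, mulVec_mulVec, Matrix.mul_assoc]
  abel

end Matrix

theorem stmt0 {n m K : Type*} [Fintype n] [Fintype m] [DecidableEq n] [Field K]
    (P : Matrix n n K) (Q : Matrix n m K) (R : Matrix m n K) (S : Matrix m m K)
    (hP : IsUnit P.det) (x₁ y₁ : n → K) (x₂ y₂ : m → K) :
    (Matrix.fromBlocks P Q R S).mulVec (Sum.elim x₁ x₂) = Sum.elim y₁ y₂ ↔
      (Matrix.fromBlocks P⁻¹ (-(P⁻¹ * Q)) (R * P⁻¹) (S - R * P⁻¹ * Q)).mulVec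
          (Sum.elim y₁ x₂) = Sum.elim x₁ y₂ := by
  simp only [fromBlocks_mulVec, Sum.elim_comp_inl, Sum.elim_comp_inr, Sum.elim_eq_iff]
  rw [mulVec_add_mulVec_eq_iff_of_isUnit_det Q hP, and_congr_right_iff]
  rintro rfl
  rw [mulVec_add_mulVec_eq_schur_mulVec]
end

section
/- (Tucker's determinant formula over F2, diagonal case) Let A be a symmetric V×V matrix over F2 and X ⊆ V with det A[X] ≠ 0. Then for every Y ⊆ V, det((A*X)[Y]) = det(A[X Δ Y]) / det(A[X]) = det(A[X Δ Y]), where Δ denotes symmetric difference and A[Z] denotes the principal submatrix of A indexed by Z. -/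
open Matrix

variable {V : Type*} [Fintype V] [DecidableEq V] {K : Type*} [Field K]

/-- Principal submatrix of `A` on index set `X`. -/
def psub (A : Matrix V V K) (X : Finset V) :
    Matrix {v // v ∈ X} {v // v ∈ X} K :=
  A.submatrix Subtype.val Subtype.val

/-- Principal pivot transform of `A` on index set `X`. -/
noncomputable def pivot (A : Matrix V V K) (X : Finset V) : Matrix V V K :=
  let P : Matrix {v // v ∈ X} {v // v ∈ X} K := A.submatrix Subtype.val Subtype.val
  let Q : Matrix {v // v ∈ X} {v // v ∉ X} K := A.submatrix Subtype.val Subtype.val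
  let R : Matrix {v // v ∉ X} {v // v ∈ X} K := A.submatrix Subtype.val Subtype.val
  let S : Matrix {v // v ∉ X} {v // v ∉ X} K := A.submatrix Subtype.val Subtype.val
  (Matrix.fromBlocks P⁻¹ (-(P⁻¹ * Q)) (R * P⁻¹) (S - R * P⁻¹ * Q)).submatrix
    (Equiv.sumCompl (· ∈ X)).symm (Equiv.sumCompl (· ∈ X)).symm

/-!
For `M : Matrix V V K` and `Z ⊆ V` let `M⟨Z⟩ = rowsOrOne M Z` take its rows in `Z` from `M` and
its other rows from the identity, so that `det M⟨Z⟩ = det M[Z]`. The block formula for the pivot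
gives the exchange identity `(A*X) · A⟨X⟩ = A⟨Xᶜ⟩`, and comparing rows then gives
`(A*X)⟨Y⟩ · A⟨X⟩ = A⟨X ∆ Y⟩`. Taking determinants, `det (A*X)[Y] · det A[X] = det A[X ∆ Y]` over
any field, and over `𝔽₂` the nonzero `det A[X]` is `1`.
-/

set_option linter.unusedSectionVars false

def rowsOrOne (M : Matrix V V K) (Z : Finset V) : Matrix V V K :=
  fun i j => if i ∈ Z then M i j else (1 : Matrix V V K) i j

section Blocks

variable (M : Matrix V V K) (Z : Finset V)

local notation "e" => Equiv.sumCompl (· ∈ Z)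

lemma pivot_submatrix_sumCompl :
    (pivot M Z).submatrix e e =
      let B := M.submatrix e e
      fromBlocks B.toBlocks₁₁⁻¹ (-(B.toBlocks₁₁⁻¹ * B.toBlocks₁₂)) (B.toBlocks₂₁ * B.toBlocks₁₁⁻¹)
        (B.toBlocks₂₂ - B.toBlocks₂₁ * B.toBlocks₁₁⁻¹ * B.toBlocks₁₂) := by
  simp only [pivot, submatrix_submatrix, Equiv.symm_comp_self, submatrix_id_id]
  rfl

lemma rowsOrOne_submatrix_sumCompl :
    (rowsOrOne M Z).submatrix e e =
      fromBlocks (M.submatrix e e).toBlocks₁₁ (M.submatrix e e).toBlocks₁₂ 0 1 := by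
  ext (i | i) (j | j)
  · simp [rowsOrOne, i.2, toBlocks₁₁]
  · simp [rowsOrOne, i.2, toBlocks₁₂]
  · simp [rowsOrOne, i.2, one_apply, (ne_of_mem_of_not_mem j.2 i.2).symm]
  · simp only [rowsOrOne, submatrix_apply, Equiv.sumCompl_apply_inr, if_neg i.2,
      fromBlocks_apply₂₂, one_apply]
    exact if_congr Subtype.val_inj rfl rfl

lemma rowsOrOne_compl_submatrix_sumCompl :
    (rowsOrOne M Zᶜ).submatrix e e =
      fromBlocks 1 0 (M.submatrix e e).toBlocks₂₁ (M.submatrix e e).toBlocks₂₂ := by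
  ext (i | i) (j | j)
  · simp only [rowsOrOne, submatrix_apply, Equiv.sumCompl_apply_inl, Finset.mem_compl, i.2,
      not_true, if_false, fromBlocks_apply₁₁, one_apply]
    exact if_congr Subtype.val_inj rfl rfl
  · simp [rowsOrOne, i.2, one_apply, ne_of_mem_of_not_mem i.2 j.2]
  · simp [rowsOrOne, i.2, toBlocks₂₁]
  · simp [rowsOrOne, i.2, toBlocks₂₂]

end Blocks

lemma det_rowsOrOne (M : Matrix V V K) (Z : Finset V) :
    (rowsOrOne M Z).det = (psub M Z).det := by
  rw [← det_submatrix_equiv_self (Equiv.sumCompl (· ∈ Z)), rowsOrOne_submatrix_sumCompl,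
    det_fromBlocks_zero₂₁, det_one, mul_one]
  rfl

lemma pivot_mul_rowsOrOne (A : Matrix V V K) (X : Finset V) (hX : IsUnit (psub A X).det) :
    pivot A X * rowsOrOne A X = rowsOrOne A Xᶜ := by
  apply (reindex (Equiv.sumCompl (· ∈ X)).symm (Equiv.sumCompl (· ∈ X)).symm).injective
  rw [reindex_apply, reindex_apply, Equiv.symm_symm,
    ← submatrix_mul_equiv (e₂ := Equiv.sumCompl (· ∈ X)), pivot_submatrix_sumCompl,
    rowsOrOne_submatrix_sumCompl, rowsOrOne_compl_submatrix_sumCompl, fromBlocks_multiply]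
  set B := A.submatrix (Equiv.sumCompl (· ∈ X)) (Equiv.sumCompl (· ∈ X))
  have hinv : B.toBlocks₁₁⁻¹ * B.toBlocks₁₁ = 1 := nonsing_inv_mul _ hX
  simp only [Matrix.mul_zero, Matrix.mul_one, add_zero, Matrix.mul_assoc, hinv, add_neg_cancel,
    add_sub_cancel]

lemma rowsOrOne_mul_apply (M N : Matrix V V K) (Z : Finset V) (i j : V) :
    (rowsOrOne M Z * N) i j = if i ∈ Z then (M * N) i j else N i j := by
  by_cases hi : i ∈ Z <;> simp [mul_apply, rowsOrOne, hi, one_apply]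

lemma rowsOrOne_mul_rowsOrOne_of_mul_eq {M N : Matrix V V K} {Z : Finset V}
    (h : M * rowsOrOne N Z = rowsOrOne N Zᶜ) (Y : Finset V) :
    rowsOrOne M Y * rowsOrOne N Z = rowsOrOne N (symmDiff Z Y) := by
  ext i j
  rw [rowsOrOne_mul_apply, h]
  by_cases hY : i ∈ Y <;> by_cases hZ : i ∈ Z <;> simp [rowsOrOne, hY, hZ, Finset.mem_symmDiff]

theorem det_psub_pivot_mul_det_psub (A : Matrix V V K) (X : Finset V)
    (hX : IsUnit (psub A X).det) (Y : Finset V) :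
    (psub (pivot A X) Y).det * (psub A X).det = (psub A (symmDiff X Y)).det := by
  rw [← det_rowsOrOne, ← det_rowsOrOne, ← det_mul,
    rowsOrOne_mul_rowsOrOne_of_mul_eq (pivot_mul_rowsOrOne A X hX), det_rowsOrOne]

theorem stmt3_general (A : Matrix V V (ZMod 2)) (X : Finset V)
    (hX : (psub A X).det ≠ 0) (Y : Finset V) :
    (psub (pivot A X) Y).det = (psub A (symmDiff X Y)).det := by
  have hX1 : (psub A X).det = 1 := Fin.eq_one_of_ne_zero _ hX
  rw [← det_psub_pivot_mul_det_psub A X (isUnit_iff_ne_zero.mpr hX), hX1, mul_one]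

theorem stmt3 (A : Matrix V V (ZMod 2)) (hA : A.IsSymm) (X : Finset V)
    (hX : (psub A X).det ≠ 0) (Y : Finset V) :
    (psub (pivot A X) Y).det = (psub A (symmDiff X Y)).det :=
  stmt3_general A X hX Y
end

section
/- Let A be a square matrix over a field and X a set of indices such that both A*X and (A*X)*Y are defined (i.e., the relevant principal submatrices are invertible). Then A*(X Δ Y) is defined and (A*X)*Y = A*(X Δ Y), where Δ is symmetric difference. -/
open Matrix

variable {V : Type*} [Fintype V] [DecidableEq V] {K : Type*} [Field K]

/-!
Let `M_X = piecewiseRows X A 1` and `N_X = piecewiseRows X 1 A`. They send `x` to `(y₁, x₂)` and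
to `(x₁, y₂)`, so the defining relation of the pivot reads `A*X · M_X = N_X`; since
`det M_X = det A[X]`, this relation determines `A*X`.

With `B = A*X`, mixing rows along `Y` commutes with right multiplication, so `B · M_X = N_X`
and `1 · M_X = M_X` give `piecewiseRows Y B 1 · M_X = M_{XΔY}` and
`piecewiseRows Y 1 B · M_X = N_{XΔY}`.
Hence `B*Y · M_{XΔY} = N_{XΔY}`, and determinants give `det A[XΔY] = det B[Y] · det A[X] ≠ 0`.
-/

namespace Matrix

variable {m n α : Type*}

def piecewiseRows (s : Finset m) [DecidablePred (· ∈ s)] (M N : Matrix m n α) : Matrix m n α :=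
  of fun i => if i ∈ s then M i else N i

section piecewiseRows

variable (s : Finset m) [DecidablePred (· ∈ s)]

@[simp]
theorem piecewiseRows_apply (M N : Matrix m n α) (i : m) (j : n) :
    piecewiseRows s M N i j = if i ∈ s then M i j else N i j := by
  simp only [piecewiseRows, of_apply]
  split_ifs <;> rfl

theorem piecewiseRows_mul {l : Type*} [Fintype n] [NonUnitalNonAssocSemiring α]
    (M N : Matrix m n α) (P : Matrix n l α) :
    piecewiseRows s M N * P = piecewiseRows s (M * P) (N * P) := by
  ext i j
  by_cases hi : i ∈ s <;> simp [hi, mul_apply]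

end piecewiseRows

theorem piecewiseRows_piecewiseRows_symmDiff [DecidableEq m] (s t : Finset m) (M N : Matrix m n α) :
    piecewiseRows t (piecewiseRows s N M) (piecewiseRows s M N) =
      piecewiseRows (symmDiff s t) M N := by
  ext i j
  by_cases hs : i ∈ s <;> by_cases ht : i ∈ t <;> simp [hs, ht, Finset.mem_symmDiff]

end Matrix

section Blocks

variable {ι : Type*} [DecidableEq ι] (A : Matrix ι ι K) (X : Finset ι)

theorem pivot_submatrix_sumCompl_s4 :
    (pivot A X).submatrix (Equiv.sumCompl (· ∈ X)) (Equiv.sumCompl (· ∈ X)) =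
      fromBlocks (psub A X)⁻¹ (-((psub A X)⁻¹ * A.toBlock (· ∈ X) (· ∉ X)))
        (A.toBlock (· ∉ X) (· ∈ X) * (psub A X)⁻¹)
        (A.toBlock (· ∉ X) (· ∉ X) -
          A.toBlock (· ∉ X) (· ∈ X) * (psub A X)⁻¹ * A.toBlock (· ∈ X) (· ∉ X)) := by
  simp only [pivot, submatrix_submatrix, Equiv.symm_comp_self, submatrix_id_id]
  rfl

theorem piecewiseRows_one_submatrix_sumCompl :
    (piecewiseRows X A 1).submatrix (Equiv.sumCompl (· ∈ X)) (Equiv.sumCompl (· ∈ X)) =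
      fromBlocks (psub A X) (A.toBlock (· ∈ X) (· ∉ X)) 0 1 := by
  ext (i | i) (j | j) <;> simp [psub, i.2, one_apply, Subtype.val_inj]
  exact fun h => i.2 (h ▸ j.2)

theorem one_piecewiseRows_submatrix_sumCompl :
    (piecewiseRows X 1 A).submatrix (Equiv.sumCompl (· ∈ X)) (Equiv.sumCompl (· ∈ X)) =
      fromBlocks 1 0 (A.toBlock (· ∉ X) (· ∈ X)) (A.toBlock (· ∉ X) (· ∉ X)) := by
  ext (i | i) (j | j) <;> simp [i.2, one_apply]
  exact fun h => j.2 (h ▸ i.2)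

end Blocks

section Pivot

variable (A : Matrix V V K) (X : Finset V)

theorem det_piecewiseRows_one : (piecewiseRows X A 1).det = (psub A X).det := by
  rw [← det_submatrix_equiv_self (Equiv.sumCompl (· ∈ X)), piecewiseRows_one_submatrix_sumCompl,
    det_fromBlocks_zero₂₁, det_one, mul_one]

theorem pivot_mul_piecewiseRows (hX : (psub A X).det ≠ 0) :
    pivot A X * piecewiseRows X A 1 = piecewiseRows X 1 A := by
  have hP : (psub A X)⁻¹ * psub A X = 1 := nonsing_inv_mul _ (isUnit_iff_ne_zero.mpr hX)
  apply (reindex (Equiv.sumCompl (· ∈ X)).symm (Equiv.sumCompl (· ∈ X)).symm).injective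
  simp only [reindex_apply, Equiv.symm_symm]
  rw [submatrix_mul _ _ _ _ _ (Equiv.sumCompl (· ∈ X)).bijective, pivot_submatrix_sumCompl_s4,
    piecewiseRows_one_submatrix_sumCompl, one_piecewiseRows_submatrix_sumCompl, fromBlocks_multiply]
  congr 1 <;> simp [Matrix.mul_assoc, hP]

theorem eq_pivot_of_mul_piecewiseRows (hX : (psub A X).det ≠ 0) {C : Matrix V V K}
    (hC : C * piecewiseRows X A 1 = piecewiseRows X 1 A) : C = pivot A X := by
  have hM : IsUnit (piecewiseRows X A 1) := by
    rw [isUnit_iff_isUnit_det, det_piecewiseRows_one]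
    exact isUnit_iff_ne_zero.mpr hX
  rw [← hM.mul_left_inj, hC, pivot_mul_piecewiseRows A X hX]

end Pivot

theorem stmt4 (A : Matrix V V K) (X Y : Finset V)
    (hX : (psub A X).det ≠ 0) (hY : (psub (pivot A X) Y).det ≠ 0) :
    (psub A (symmDiff X Y)).det ≠ 0 ∧ pivot (pivot A X) Y = pivot A (symmDiff X Y) := by
  have hAX := pivot_mul_piecewiseRows A X hX
  have hM : piecewiseRows Y (pivot A X) 1 * piecewiseRows X A 1 =
      piecewiseRows (symmDiff X Y) A 1 := by
    rw [piecewiseRows_mul, hAX, Matrix.one_mul, piecewiseRows_piecewiseRows_symmDiff]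
  have hN : piecewiseRows Y 1 (pivot A X) * piecewiseRows X A 1 =
      piecewiseRows (symmDiff X Y) 1 A := by
    rw [piecewiseRows_mul, hAX, Matrix.one_mul, piecewiseRows_piecewiseRows_symmDiff]
  have hXY : (psub A (symmDiff X Y)).det ≠ 0 := by
    rw [← det_piecewiseRows_one, ← hM, det_mul, det_piecewiseRows_one, det_piecewiseRows_one]
    exact mul_ne_zero hY hX
  refine ⟨hXY, eq_pivot_of_mul_piecewiseRows A _ hXY ?_⟩
  rw [← hM, ← Matrix.mul_assoc, pivot_mul_piecewiseRows _ Y hY, hN]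
end

section
/- If A is a symmetric matrix over F2 and A*X is defined, then A*X is symmetric. -/
open Matrix

variable {V : Type*} [Fintype V] [DecidableEq V] {K : Type*} [Field K]

/- The diagonal blocks `P⁻¹` and `S - R P⁻¹ Q` of the pivot are symmetric because `Rᵀ = Q`;
the off-diagonal blocks `-P⁻¹ Q` and `R P⁻¹` are transposes of each other up to a sign, which
disappears in characteristic two. -/
theorem Matrix.IsSymm.pivot {n : Type*} [DecidableEq n] {α : Type*} [Field α] [CharP α 2]
    {A : Matrix n n α} (hA : A.IsSymm) (X : Finset n) : (pivot A X).IsSymm := by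
  have transpose_block : ∀ {p q : n → Prop} (f : Subtype p → n) (g : Subtype q → n),
      (A.submatrix f g)ᵀ = A.submatrix g f := fun f g => by
    rw [transpose_submatrix, hA.eq]
  have hP : (A.submatrix ((↑) : {v // v ∈ X} → n) (↑)).IsSymm := hA.submatrix _
  refine IsSymm.submatrix (IsSymm.fromBlocks hP.inv ?_ ?_) _
  · rw [transpose_neg, transpose_mul, transpose_block, hP.inv.eq]
    ext i j
    exact CharTwo.neg_eq _
  · refine (hA.submatrix _).sub ?_
    rw [IsSymm, transpose_mul, transpose_mul, transpose_block, transpose_block, hP.inv.eq, Matrix.mul_assoc]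

theorem stmt5_general (A : Matrix V V (ZMod 2)) (hA : A.IsSymm) (X : Finset V) :
    (pivot A X).IsSymm :=
  hA.pivot X

theorem stmt5 (A : Matrix V V (ZMod 2)) (hA : A.IsSymm) (X : Finset V)
    (hX : (psub A X).det ≠ 0) : (pivot A X).IsSymm :=
  stmt5_general A hA X
end

section
/- Let A be a V×V matrix over a field and X ⊆ V with A[X] invertible. Then the eigenspace of A for eigenvalue 1 equals the eigenspace of A*X for eigenvalue 1: E₁(A) = E₁(A*X). -/
open Matrix

variable {V : Type*} [Fintype V] [DecidableEq V] {K : Type*} [Field K]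

/-!
A relation `A (x₁, x₂) = (y₁, y₂)` holds exactly when `A * X (y₁, x₂) = (x₁, y₂)`: the
pivot exchanges the `X`-parts of input and output. For a fixed point `x = y` this exchange
does nothing, so `A` and `A * X` have the same fixed vectors. After reindexing `V` as
`X ⊕ Xᶜ`, the exchange property is a computation with the Schur-complement blocks.
-/

namespace Matrix

variable {m n α : Type*}

theorem mulVec_eq_self_iff_submatrix_equiv [Fintype m] [Fintype n] [NonUnitalNonAssocSemiring α]
    (M : Matrix n n α) (e : m ≃ n) (v : n → α) :
    M *ᵥ v = v ↔ M.submatrix e e *ᵥ (v ∘ e) = v ∘ e := by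
  rw [submatrix_mulVec_equiv, Function.comp_assoc, e.self_comp_symm, Function.comp_id]
  exact (e.surjective.injective_comp_right.eq_iff).symm

theorem submatrix_sumCompl_eq_fromBlocks {V : Type*} (A : Matrix V V α) (p : V → Prop)
    [DecidablePred p] :
    A.submatrix (Equiv.sumCompl p) (Equiv.sumCompl p) =
      fromBlocks (A.submatrix Subtype.val Subtype.val) (A.submatrix Subtype.val Subtype.val)
        (A.submatrix Subtype.val Subtype.val) (A.submatrix Subtype.val Subtype.val) := by
  ext (i | i) (j | j) <;> rfl

end Matrix

section PivotBlocks

variable {α β K : Type*} [Fintype α] [Fintype β] [DecidableEq α] [Field K]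

theorem fromBlocks_mulVec_eq_iff_pivot (P : Matrix α α K) (Q : Matrix α β K)
    (R : Matrix β α K) (S : Matrix β β K) (hP : IsUnit P.det)
    (x₁ y₁ : α → K) (x₂ y₂ : β → K) :
    fromBlocks P Q R S *ᵥ Sum.elim x₁ x₂ = Sum.elim y₁ y₂ ↔
      fromBlocks P⁻¹ (-(P⁻¹ * Q)) (R * P⁻¹) (S - R * P⁻¹ * Q) *ᵥ Sum.elim y₁ x₂ =
        Sum.elim x₁ y₂ := by
  simp only [fromBlocks_mulVec, Sum.elim_comp_inl, Sum.elim_comp_inr, Sum.elim_eq_iff]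
  have hsolve : P *ᵥ x₁ + Q *ᵥ x₂ = y₁ ↔ P⁻¹ *ᵥ y₁ + -(P⁻¹ * Q) *ᵥ x₂ = x₁ := by
    constructor <;> rintro rfl <;>
      simp only [mulVec_add, neg_mulVec, mulVec_neg, mulVec_mulVec, ← Matrix.mul_assoc,
        nonsing_inv_mul P hP, mul_nonsing_inv P hP, Matrix.one_mul, one_mulVec] <;> abel
  have hR : R *ᵥ (P⁻¹ *ᵥ y₁ + -(P⁻¹ * Q) *ᵥ x₂) + S *ᵥ x₂ =
      (R * P⁻¹) *ᵥ y₁ + (S - R * P⁻¹ * Q) *ᵥ x₂ := by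
    simp only [mulVec_add, neg_mulVec, mulVec_neg, sub_mulVec, mulVec_mulVec, Matrix.mul_assoc]
    abel
  rw [hsolve]
  constructor
  · rintro ⟨h₁, h₂⟩
    exact ⟨h₁, by rw [← hR, h₁, h₂]⟩
  · rintro ⟨h₁, h₂⟩
    exact ⟨h₁, by rw [← h₁, hR, h₂]⟩

theorem fromBlocks_mulVec_eq_self_iff_pivot (P : Matrix α α K) (Q : Matrix α β K)
    (R : Matrix β α K) (S : Matrix β β K) (hP : IsUnit P.det) (w : α ⊕ β → K) :
    fromBlocks P Q R S *ᵥ w = w ↔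
      fromBlocks P⁻¹ (-(P⁻¹ * Q)) (R * P⁻¹) (S - R * P⁻¹ * Q) *ᵥ w = w := by
  rw [← Sum.elim_comp_inl_inr w]
  exact fromBlocks_mulVec_eq_iff_pivot P Q R S hP _ _ _ _

end PivotBlocks

theorem stmt6 (A : Matrix V V K) (X : Finset V) (hX : IsUnit (psub A X).det) :
    {v : V → K | A.mulVec v = v} = {v : V → K | (pivot A X).mulVec v = v} := by
  ext v
  simp only [Set.mem_ofPred_eq, mulVec_eq_self_iff_submatrix_equiv _ (Equiv.sumCompl (· ∈ X))]
  rw [submatrix_sumCompl_eq_fromBlocks, pivot, submatrix_submatrix, Equiv.symm_comp_self,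
    submatrix_id_id]
  exact fromBlocks_mulVec_eq_self_iff_pivot _ _ _ _ hX _
end

section
/- (Kernel invariance under dual pivot) Let G be a symmetric V×V matrix over F2 and X ⊆ V with det((G+I)[X]) = 1. Define the dual pivot G ∗̄ X = ((G+I)*X) + I. Then ker(G ∗̄ X) = ker(G). -/
/-! A principal pivot transform swaps the roles of the coordinates in `X` between input and
output: `A (x, y) = (a, b)` iff `(A * X) (a, y) = (x, b)`. In particular `A` and `A * X` have the
same fixed vectors. Over `𝔽₂` the fixed vectors of `M + 1` form the kernel of `M`, so the kernel
of `(G + 1) * X + 1` is that of `G`. -/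

open Matrix

variable {V : Type*} [Fintype V] [DecidableEq V] {K : Type*} [Field K]

/-- Dual pivot of `G` on `X`: pivot conjugated by adding the identity. -/
noncomputable def dualPivot (G : Matrix V V (ZMod 2)) (X : Finset V) : Matrix V V (ZMod 2) :=
  pivot (G + 1) X + 1

namespace Matrix

section Pivot

variable {n m α : Type*} [Fintype n] [Fintype m] [DecidableEq n] [CommRing α]

theorem inv_mulVec_eq_iff {P : Matrix n n α} (hP : IsUnit P.det) {u v : n → α} :
    P⁻¹ *ᵥ u = v ↔ u = P *ᵥ v := by
  constructor
  · rintro rfl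
    rw [mulVec_mulVec, mul_nonsing_inv P hP, one_mulVec]
  · rintro rfl
    rw [mulVec_mulVec, nonsing_inv_mul P hP, one_mulVec]

theorem fromBlocks_pivot_mulVec_iff {P : Matrix n n α} (Q : Matrix n m α) (R : Matrix m n α)
    (S : Matrix m m α) (hP : IsUnit P.det) (x a : n → α) (y b : m → α) :
    fromBlocks P⁻¹ (-(P⁻¹ * Q)) (R * P⁻¹) (S - R * P⁻¹ * Q) *ᵥ Sum.elim a y = Sum.elim x b ↔
      fromBlocks P Q R S *ᵥ Sum.elim x y = Sum.elim a b := by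
  have hx : P⁻¹ *ᵥ a + -(P⁻¹ * Q) *ᵥ y = P⁻¹ *ᵥ (a - Q *ᵥ y) := by
    rw [neg_mulVec, ← mulVec_mulVec, mulVec_sub, sub_eq_add_neg]
  have hb : (R * P⁻¹) *ᵥ a + (S - R * P⁻¹ * Q) *ᵥ y = R *ᵥ (P⁻¹ *ᵥ (a - Q *ᵥ y)) + S *ᵥ y := by
    rw [sub_mulVec, mulVec_sub, mulVec_sub, mulVec_mulVec, mulVec_mulVec, mulVec_mulVec,
      Matrix.mul_assoc]
    abel
  simp only [fromBlocks_mulVec, Sum.elim_comp_inl, Sum.elim_comp_inr, Sum.elim_eq_iff]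
  rw [hx, hb, and_congr_right fun h => by rw [h], inv_mulVec_eq_iff hP, sub_eq_iff_eq_add,
    eq_comm]

theorem fromBlocks_pivot_mulVec_eq_self_iff {P : Matrix n n α} (Q : Matrix n m α)
    (R : Matrix m n α) (S : Matrix m m α) (hP : IsUnit P.det) (w : n ⊕ m → α) :
    fromBlocks P⁻¹ (-(P⁻¹ * Q)) (R * P⁻¹) (S - R * P⁻¹ * Q) *ᵥ w = w ↔
      fromBlocks P Q R S *ᵥ w = w := by
  rw [← Sum.elim_comp_inl_inr w]
  exact fromBlocks_pivot_mulVec_iff Q R S hP _ _ _ _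

end Pivot

theorem fromBlocks_submatrix_sumCompl {n α : Type*} (A : Matrix n n α) (p : n → Prop)
    [DecidablePred p] :
    (fromBlocks (A.submatrix Subtype.val Subtype.val : Matrix {i // p i} {i // p i} α)
      (A.submatrix Subtype.val Subtype.val : Matrix {i // p i} {i // ¬p i} α)
      (A.submatrix Subtype.val Subtype.val : Matrix {i // ¬p i} {i // p i} α)
      (A.submatrix Subtype.val Subtype.val : Matrix {i // ¬p i} {i // ¬p i} α)).submatrix
        (Equiv.sumCompl p).symm (Equiv.sumCompl p).symm = A := by
  ext i j
  by_cases hi : p i <;> by_cases hj : p j <;> simp [hi, hj]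

theorem submatrix_equiv_symm_mulVec_eq_self_iff {l n α : Type*} [Fintype l] [Fintype n]
    [NonUnitalNonAssocSemiring α] (M : Matrix l l α) (e : l ≃ n) (v : n → α) :
    M.submatrix e.symm e.symm *ᵥ v = v ↔ M *ᵥ (v ∘ e) = v ∘ e := by
  rw [submatrix_mulVec_equiv, Equiv.symm_symm, Equiv.comp_symm_eq]

theorem add_one_mulVec_eq_zero_iff {n α : Type*} [Fintype n] [DecidableEq n] [Ring α]
    [CharP α 2] (M : Matrix n n α) (v : n → α) :
    (M + 1) *ᵥ v = 0 ↔ M *ᵥ v = v := by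
  simp only [add_mulVec, one_mulVec, funext_iff, Pi.add_apply, Pi.zero_apply,
    CharTwo.add_eq_zero]

end Matrix

theorem pivot_mulVec_eq_self_iff {A : Matrix V V K} {X : Finset V} (hX : IsUnit (psub A X).det)
    (v : V → K) : pivot A X *ᵥ v = v ↔ A *ᵥ v = v := by
  conv_rhs => rw [← fromBlocks_submatrix_sumCompl A (· ∈ X)]
  rw [pivot, submatrix_equiv_symm_mulVec_eq_self_iff, submatrix_equiv_symm_mulVec_eq_self_iff]
  exact fromBlocks_pivot_mulVec_eq_self_iff _ _ _ hX _

theorem stmt8_general (G : Matrix V V (ZMod 2)) (X : Finset V)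
    (hX : (psub (G + 1) X).det = 1) :
    {v : V → ZMod 2 | (dualPivot G X).mulVec v = 0} =
      {v : V → ZMod 2 | G.mulVec v = 0} := by
  ext v
  rw [Set.mem_ofPred_eq, Set.mem_ofPred_eq, dualPivot, add_one_mulVec_eq_zero_iff,
    pivot_mulVec_eq_self_iff (hX ▸ isUnit_one), add_mulVec, one_mulVec, add_eq_right]

theorem stmt8 (G : Matrix V V (ZMod 2)) (hG : G.IsSymm) (X : Finset V)
    (hX : (psub (G + 1) X).det = 1) :
    {v : V → ZMod 2 | (dualPivot G X).mulVec v = 0} =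
      {v : V → ZMod 2 | G.mulVec v = 0} :=
  stmt8_general G X hX
end

section
/- (Invariance of maximal pivots under dual pivot) Let G be a symmetric V×V matrix over F2 and X ⊆ V with det((G+I)[X]) = 1. Then the family of maximal elements of {Y ⊆ V : det G[Y] = 1} equals the family of maximal elements of {Y ⊆ V : det (G ∗̄ X)[Y] = 1}, where G ∗̄ X = ((G+I)*X) + I is the dual pivot. -/
open Matrix

variable {V : Type*} [Fintype V] [DecidableEq V] {K : Type*} [Field K]

open Finset
open scoped symmDiff

set_option linter.unusedSectionVars false

/-!
Tucker's identity `det (A ∗ X)[Y] · det A[X] = det A[X ∆ Y]` comes from taking determinants in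
`R_Y(A ∗ X) · R_X(A) = R_{X ∆ Y}(A)`, where `R_S(A) = rowPiecewise S A 1` has the rows of `A`
indexed by `S` and the rows of `1` elsewhere. Combined with the expansion
`det (M + 1)[Z] = ∑_{W ⊆ Z} det M[W]`, used for the pivot and for `G`, it gives over `F₂`
  `det (G ∗̄ X)[Z] = ∑_{W ⊆ Z} ∑_{U ⊆ X ∆ W} det G[U] = ∑_{Z ⊆ T ⊆ Z ∪ X} det G[T]`,
because the `W ⊆ Z` with `U ⊆ X ∆ W` form the interval `[U \ X, Z \ (U ∩ X)]`, of odd size exactly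
when `Z ⊆ U ⊆ Z ∪ X`. A transform that is triangular with unit diagonal for inclusion preserves the
maximal elements of the support.
-/

section MaximalSupport

variable {α M : Type*} [PartialOrder α] [AddCommMonoid M]

theorem maximal_ne_zero_iff_of_eq_sum_ge [WellFoundedGT α] {f g : α → M} {s : α → Finset α}
    (hs_mem : ∀ a, a ∈ s a) (hs_le : ∀ a, ∀ b ∈ s a, a ≤ b) (hg : ∀ a, g a = ∑ b ∈ s a, f b)
    (a : α) : Maximal (f · ≠ 0) a ↔ Maximal (g · ≠ 0) a := by
  have g_eq_f : ∀ a, (∀ b, a < b → f b = 0) → g a = f a := fun a hf =>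
    (hg a).trans <| sum_eq_single_of_mem a (hs_mem a) fun b hb hba =>
      hf b ((hs_le a b hb).lt_of_ne hba.symm)
  have vanish_above : (∀ b, a < b → f b = 0) ↔ (∀ b, a < b → g b = 0) := by
    refine ⟨fun hf b hab => (hg b).trans <| sum_eq_zero fun c hc =>
      hf c (hab.trans_le (hs_le b c hc)), fun hg0 b => ?_⟩
    induction b using WellFoundedGT.induction with
    | _ b ih =>
      intro hab
      rw [← g_eq_f b fun c hbc => ih c hbc (hab.trans hbc)]
      exact hg0 b hab
  simp only [maximal_iff_forall_gt, not_not]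
  constructor
  · rintro ⟨hfa, hf⟩
    exact ⟨g_eq_f a hf ▸ hfa, fun b hab => vanish_above.1 hf b hab⟩
  · rintro ⟨hga, hg0⟩
    have hf := vanish_above.2 fun b hab => hg0 hab
    exact ⟨g_eq_f a hf ▸ hga, fun b hab => hf b hab⟩

end MaximalSupport

section SymmDiffCount

variable {ι : Type*} [DecidableEq ι]

theorem natCast_card_Icc_finset_zmod_two (A B : Finset ι) :
    ((Icc A B).card : ZMod 2) = if A = B then 1 else 0 := by
  by_cases hAB : A ⊆ B
  · rw [card_Icc_finset hAB]
    split_ifs with h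
    · simp [h]
    · obtain ⟨k, hk⟩ : ∃ k, B.card - A.card = k + 1 :=
        Nat.exists_eq_add_one.2 (Nat.sub_pos_of_lt (card_lt_card (ssubset_of_subset_of_ne hAB h)))
      simp [hk, pow_succ, CharTwo.two_eq_zero]
  · rw [Icc_eq_empty hAB, if_neg (fun h => hAB h.subset)]
    simp

theorem filter_powerset_subset_symmDiff_eq_Icc (U X Z : Finset ι) :
    {W ∈ Z.powerset | U ⊆ X ∆ W} = Icc (U \ X) (Z \ (U ∩ X)) := by
  ext W
  simp only [mem_filter, mem_powerset, mem_Icc, subset_iff, mem_symmDiff, mem_sdiff, mem_inter]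
  grind

theorem sdiff_eq_sdiff_inter_iff_mem_Icc (U X Z : Finset ι) :
    U \ X = Z \ (U ∩ X) ↔ U ∈ Icc Z (Z ∪ X) := by
  simp only [mem_Icc, Finset.ext_iff, subset_iff, mem_sdiff, mem_inter, mem_union]
  grind

theorem sum_powerset_sum_powerset_symmDiff [Fintype ι] (f : Finset ι → ZMod 2) (X Z : Finset ι) :
    ∑ W ∈ Z.powerset, ∑ U ∈ (X ∆ W).powerset, f U = ∑ T ∈ Icc Z (Z ∪ X), f T := by
  rw [sum_comm' (t' := univ) (s' := fun U => {W ∈ Z.powerset | U ⊆ X ∆ W}) (by simp)]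
  simp only [sum_const, nsmul_eq_mul, filter_powerset_subset_symmDiff_eq_Icc,
    natCast_card_Icc_finset_zmod_two, sdiff_eq_sdiff_inter_iff_mem_Icc, ite_mul, one_mul, zero_mul]
  rw [sum_ite_mem, univ_inter]

end SymmDiffCount

def rowPiecewise (S : Finset V) (A B : Matrix V V K) : Matrix V V K :=
  of (S.piecewise A B)

section RowPiecewise

variable (S : Finset V) (A B C : Matrix V V K)

@[simp]
theorem rowPiecewise_apply (i j : V) :
    rowPiecewise S A B i j = if i ∈ S then A i j else B i j := by
  by_cases hi : i ∈ S <;> simp [rowPiecewise, Finset.piecewise, hi]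

theorem rowPiecewise_mul : rowPiecewise S A B * C = rowPiecewise S (A * C) (B * C) := by
  ext i j
  by_cases hi : i ∈ S <;> simp [mul_apply, hi]

theorem det_add_eq_sum_det_rowPiecewise :
    (A + B).det = ∑ s : Finset V, (rowPiecewise s A B).det :=
  detRowAlternating.map_add_univ A B

theorem rowPiecewise_one_eq_submatrix_fromBlocks : rowPiecewise S A 1 =
    (fromBlocks (psub A S) (A.submatrix Subtype.val Subtype.val) 0
      (1 : Matrix {v // v ∉ S} {v // v ∉ S} K)).submatrix
      (Equiv.sumCompl (· ∈ S)).symm (Equiv.sumCompl (· ∈ S)).symm := by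
  ext v w
  by_cases hv : v ∈ S <;> by_cases hw : w ∈ S <;>
    simp [psub, Equiv.sumCompl, hv, hw, one_apply, Subtype.ext_iff]
  rintro rfl; exact hv hw

theorem det_rowPiecewise_one : (rowPiecewise S A 1).det = (psub A S).det := by
  rw [rowPiecewise_one_eq_submatrix_fromBlocks, det_submatrix_equiv_self, det_fromBlocks_zero₂₁,
    det_one, mul_one]

end RowPiecewise

theorem rowPiecewise_add_one (S : Finset V) (A : Matrix V V K) :
    rowPiecewise S (A + 1) 1 = rowPiecewise S A 0 + 1 := by
  ext i j
  by_cases hi : i ∈ S <;> simp [hi]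

theorem rowPiecewise_rowPiecewise_compl (X Y : Finset V) (A : Matrix V V K) :
    rowPiecewise Y (rowPiecewise Xᶜ A 1) (rowPiecewise X A 1) = rowPiecewise (X ∆ Y) A 1 := by
  ext i j
  by_cases hx : i ∈ X <;> by_cases hy : i ∈ Y <;> simp [mem_symmDiff, hx, hy]

theorem pivot_mul_rowPiecewise (A : Matrix V V K) (X : Finset V) (hX : IsUnit (psub A X).det) :
    pivot A X * rowPiecewise X A 1 = rowPiecewise Xᶜ A 1 := by
  have hP : (psub A X)⁻¹ * psub A X = 1 := nonsing_inv_mul _ hX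
  have reindex_compl : rowPiecewise Xᶜ A 1 = (fromBlocks (1 : Matrix {v // v ∈ X} {v // v ∈ X} K)
        0 (A.submatrix Subtype.val Subtype.val)
        (A.submatrix Subtype.val Subtype.val : Matrix {v // v ∉ X} {v // v ∉ X} K)).submatrix
      (Equiv.sumCompl (· ∈ X)).symm (Equiv.sumCompl (· ∈ X)).symm := by
    ext v w
    by_cases hv : v ∈ X <;> by_cases hw : w ∈ X <;>
      simp [Equiv.sumCompl, hv, hw, one_apply, Subtype.ext_iff]
    rintro rfl; exact hw hv
  simp only [psub] at hP
  rw [rowPiecewise_one_eq_submatrix_fromBlocks, reindex_compl, pivot, submatrix_mul_equiv,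
    fromBlocks_multiply]
  simp only [psub, Matrix.mul_zero, Matrix.mul_one, add_zero, Matrix.mul_assoc, hP,
    add_neg_cancel, add_sub_cancel]

theorem det_psub_pivot_mul (A : Matrix V V K) (X Y : Finset V) (hX : IsUnit (psub A X).det) :
    (psub (pivot A X) Y).det * (psub A X).det = (psub A (X ∆ Y)).det := by
  simp only [← det_rowPiecewise_one, ← det_mul, rowPiecewise_mul, Matrix.one_mul,
    pivot_mul_rowPiecewise A X hX, rowPiecewise_rowPiecewise_compl]

theorem det_psub_add_one (M : Matrix V V K) (Z : Finset V) :
    (psub (M + 1) Z).det = ∑ W ∈ Z.powerset, (psub M W).det := by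
  rw [← det_rowPiecewise_one, rowPiecewise_add_one, det_add_eq_sum_det_rowPiecewise]
  refine (sum_subset (subset_univ _) fun W _ hW => ?_).symm.trans (sum_congr rfl fun W hW => ?_)
  · obtain ⟨i, hiW, hiZ⟩ := not_subset.1 (mt mem_powerset.2 hW)
    exact det_eq_zero_of_row_eq_zero i fun j => by simp [hiW, hiZ]
  · rw [← det_rowPiecewise_one]
    congr 1
    ext i j
    by_cases hi : i ∈ W
    · simp [hi, mem_powerset.1 hW hi]
    · simp [hi]

theorem det_psub_dualPivot (G : Matrix V V (ZMod 2)) {X : Finset V} (hX : (psub (G + 1) X).det = 1)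
    (Z : Finset V) : (psub (dualPivot G X) Z).det = ∑ T ∈ Icc Z (Z ∪ X), (psub G T).det := by
  have tucker : ∀ W, (psub (pivot (G + 1) X) W).det = (psub (G + 1) (X ∆ W)).det := fun W => by
    rw [← det_psub_pivot_mul (G + 1) X W (hX ▸ isUnit_one), hX, mul_one]
  simp only [dualPivot, det_psub_add_one, tucker]
  exact sum_powerset_sum_powerset_symmDiff _ X Z

theorem stmt15_general (G : Matrix V V (ZMod 2)) (X : Finset V)
    (hX : (psub (G + 1) X).det = 1) :
    ∀ Y : Finset V,
      ((psub G Y).det = 1 ∧ ∀ Z : Finset V, Y ⊂ Z → (psub G Z).det ≠ 1) ↔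
      ((psub (dualPivot G X) Y).det = 1 ∧
        ∀ Z : Finset V, Y ⊂ Z → (psub (dualPivot G X) Z).det ≠ 1) := by
  intro Y
  have ne_zero_iff : ∀ x : ZMod 2, x ≠ 0 ↔ x = 1 := by decide
  have h := maximal_ne_zero_iff_of_eq_sum_ge (s := fun Z => Icc Z (Z ∪ X))
    (fun Z => mem_Icc.2 ⟨le_rfl, subset_union_left⟩) (fun Z T hT => (mem_Icc.1 hT).1)
    (det_psub_dualPivot G hX) Y
  simpa only [maximal_iff_forall_gt, ne_zero_iff] using h

theorem stmt15 (G : Matrix V V (ZMod 2)) (hG : G.IsSymm) (X : Finset V)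
    (hX : (psub (G + 1) X).det = 1) :
    ∀ Y : Finset V,
      ((psub G Y).det = 1 ∧ ∀ Z : Finset V, Y ⊂ Z → (psub G Z).det ≠ 1) ↔
      ((psub (dualPivot G X) Y).det = 1 ∧
        ∀ Z : Finset V, Y ⊂ Z → (psub (dualPivot G X) Z).det ≠ 1) :=
  stmt15_general G X hX
end

section
/- Let G be a symmetric V×V matrix over F2 and X a maximal element of {Y ⊆ V : det G[Y] = 1}. Then the contraction G *\ X (the Schur complement of G[X] in G) is the zero matrix on V \ X. -/
open Matrix

variable {V : Type*} [Fintype V] [DecidableEq V] {K : Type*} [Field K]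

/-- Contraction of `A` on `X`: the pivot on `X` restricted to the complement of `X`. -/
noncomputable def contraction (A : Matrix V V K) (X : Finset V) :
    Matrix {v // v ∉ X} {v // v ∉ X} K :=
  (pivot A X).submatrix Subtype.val Subtype.val

/-! Tucker's formula: for `T` disjoint from `X`, `det G[X ∪ T] = det G[X] · det (G *\ X)[T]`,
because `(G *\ X)[T]` is the Schur complement of `G[X]` in `G[X ∪ T]`. So maximality of `X`
makes every nonempty principal minor of the contraction vanish over `𝔽₂`. For a symmetric
matrix the `1 × 1` minors are its diagonal and the `2 × 2` minors are `-a²` for its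
off-diagonal entries `a`, so the contraction is zero. -/

section

omit [Fintype V]

lemma contraction_eq_schur (A : Matrix V V K) (X : Finset V) :
    contraction A X = A.submatrix (Subtype.val : {v // v ∉ X} → V) Subtype.val -
      A.submatrix (Subtype.val : {v // v ∉ X} → V) (Subtype.val : {v // v ∈ X} → V) *
        (psub A X)⁻¹ * A.submatrix (Subtype.val : {v // v ∈ X} → V) Subtype.val := by
  ext i j
  simp [contraction, pivot, psub, Equiv.sumCompl_symm_apply_of_neg i.2,
    Equiv.sumCompl_symm_apply_of_neg j.2]

lemma contraction_isSymm {A : Matrix V V K} (hA : A.IsSymm) (X : Finset V) :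
    (contraction A X).IsSymm := by
  have hP : (psub A X)ᵀ = psub A X := by rw [psub, transpose_submatrix, hA.eq]
  rw [Matrix.IsSymm, contraction_eq_schur, transpose_sub, transpose_submatrix, hA.eq,
    Matrix.transpose_mul, Matrix.transpose_mul, transpose_nonsing_inv, hP,
    transpose_submatrix, transpose_submatrix, hA.eq, Matrix.mul_assoc]

lemma det_psub_singleton (A : Matrix V V K) (i : V) : (psub A {i}).det = A i i := by
  let : Unique {v // v ∈ ({i} : Finset V)} :=
    ⟨⟨⟨i, Finset.mem_singleton_self i⟩⟩, fun ⟨v, hv⟩ => Subtype.ext (Finset.mem_singleton.mp hv)⟩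
  rw [det_unique]
  rfl

lemma det_psub_pair (A : Matrix V V K) {i j : V} (hij : i ≠ j) :
    (psub A {i, j}).det = A i i * A j j - A i j * A j i := by
  let f : Fin 2 → {v // v ∈ ({i, j} : Finset V)} := ![⟨i, by simp⟩, ⟨j, by simp⟩]
  have hf : f.Bijective := by
    refine (Fintype.bijective_iff_injective_and_card f).2 ⟨?_, by
      rw [Fintype.card_fin, Fintype.card_coe, Finset.card_pair hij]⟩
    intro a b
    fin_cases a <;> fin_cases b <;> simp [f, hij, hij.symm]
  rw [← det_submatrix_equiv_self (Equiv.ofBijective f hf), det_fin_two]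
  rfl

lemma eq_zero_of_isSymm_of_det_psub_pair {A : Matrix V V K} (hA : A.IsSymm)
    (h : ∀ i j : V, (psub A {i, j}).det = 0) : A = 0 := by
  have hdiag : ∀ i, A i i = 0 := fun i => by
    have := h i i
    rwa [Finset.pair_eq_singleton, det_psub_singleton] at this
  ext i j
  rcases eq_or_ne i j with rfl | hij
  · exact hdiag i
  · have hpair := h i j
    rw [det_psub_pair A hij, hdiag i, hdiag j, zero_mul, zero_sub, hA.apply i j, neg_eq_zero,
      mul_self_eq_zero] at hpair
    exact hpair

section Tucker

variable (X : Finset V) (T : Finset {v // v ∉ X})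

def liftUnion : Finset V := X ∪ T.map (Function.Embedding.subtype _)

def liftUnionEquiv : {v // v ∈ liftUnion X T} ≃ {v // v ∈ X} ⊕ {w // w ∈ T} where
  toFun x := if h : x.1 ∈ X then .inl ⟨x.1, h⟩ else .inr ⟨⟨x.1, h⟩, by
    have := x.2
    simp only [liftUnion, Finset.mem_union, h, false_or, Finset.mem_map,
      Function.Embedding.coe_subtype] at this
    obtain ⟨w, hw, hwx⟩ := this
    exact (Subtype.ext hwx : w = ⟨x.1, h⟩) ▸ hw⟩
  invFun := Sum.elim (fun a => ⟨a.1, Finset.mem_union_left _ a.2⟩)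
    (fun b => ⟨b.1.1, Finset.mem_union_right _ (Finset.mem_map_of_mem _ b.2)⟩)
  left_inv x := by by_cases h : x.1 ∈ X <;> simp [h]
  right_inv x := by
    rcases x with a | b
    · simp [a.2]
    · simp [b.1.2]

lemma det_psub_liftUnion (A : Matrix V V K) (hX : IsUnit (psub A X).det) :
    (psub A (liftUnion X T)).det = (psub A X).det * (psub (contraction A X) T).det := by
  have : Invertible (psub A X) := (psub A X).invertibleOfIsUnitDet hX
  have hblocks : psub A (liftUnion X T) = (fromBlocks (psub A X)
      (A.submatrix (Subtype.val : {v // v ∈ X} → V) (fun w : {w // w ∈ T} => w.1.1))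
      (A.submatrix (fun w : {w // w ∈ T} => w.1.1) (Subtype.val : {v // v ∈ X} → V))
      (A.submatrix (fun w : {w // w ∈ T} => w.1.1) (fun w : {w // w ∈ T} => w.1.1))).submatrix
        (liftUnionEquiv X T) (liftUnionEquiv X T) := by
    ext x y
    by_cases hx : x.1 ∈ X <;> by_cases hy : y.1 ∈ X <;> simp [psub, liftUnionEquiv, hx, hy]
  rw [hblocks, det_submatrix_equiv_self, det_fromBlocks₁₁, invOf_eq_nonsing_inv]
  congr 2
  ext x y
  simp [contraction_eq_schur, psub, Matrix.mul_apply]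

lemma ssubset_liftUnion (hT : T.Nonempty) : X ⊂ liftUnion X T := by
  obtain ⟨w, hw⟩ := hT
  exact Finset.ssubset_iff_of_subset Finset.subset_union_left |>.2
    ⟨w.1, Finset.mem_union_right _ (Finset.mem_map_of_mem _ hw), w.2⟩

end Tucker

end

theorem stmt19 (G : Matrix V V (ZMod 2)) (hG : G.IsSymm) (X : Finset V)
    (hX : (psub G X).det = 1)
    (hmax : ∀ Y : Finset V, X ⊂ Y → (psub G Y).det ≠ 1) :
    contraction G X = 0 := by
  have hXunit : IsUnit (psub G X).det := hX ▸ isUnit_one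
  refine eq_zero_of_isSymm_of_det_psub_pair (contraction_isSymm hG X) fun i j => ?_
  have hminor := det_psub_liftUnion X {i, j} G hXunit
  rw [hX, one_mul] at hminor
  rw [← hminor]
  exact (by decide : ∀ x : ZMod 2, x ≠ 1 → x = 0) _
    (hmax _ (ssubset_liftUnion X {i, j} (Finset.insert_nonempty i {j})))
end
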